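/- arXiv:1908.00305 — 6 statements merged into one kernel-verified Lean document; each statement's English description precedes it below -/
import Mathlib

section
/- Let f : C → ℝ be a convex function, α > 0 and y ∈ Δ°. Suppose x* attains the minimum of x ↦ f(x) + α·D(x,y) over Δ and x* ∈ Δ°. Then for every z ∈ Δ one has f(x*) + α·D(x*,y) ≤ f(z) + α·D(z,y) − α·D(z,x*). -/
/-! The minimality of `x*` gives the first-order optimality condition
`f x* ≤ f z + α ⟪∇ω x* - ∇ω y, z - x*⟫` for every `z ∈ Δ`: restrict the objective to the
segment `[x*, z]`, where convexity bounds `f` by its chord, and apply Fermat's rule at the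
endpoint. The three-point identity `D(z,y) = D(z,x) + D(x,y) + ⟪∇ω x - ∇ω y, z - x⟫` turns this
condition into the claimed inequality. -/

open Set
open scoped RealInnerProductSpace

/-- Bregman divergence `D(x,y) = ω(x) - ω(y) - ⟪∇ω(y), x - y⟫` generated by `φ`
with gradient map `gφ`. -/
noncomputable def breg {d : ℕ} (φ : EuclideanSpace ℝ (Fin d) → ℝ)
    (gφ : EuclideanSpace ℝ (Fin d) → EuclideanSpace ℝ (Fin d))
    (x y : EuclideanSpace ℝ (Fin d)) : ℝ :=
  φ x - φ y - ⟪gφ y, x - y⟫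

theorem ConvexOn.le_add_of_isMinOn_add_of_hasFDerivAt {E : Type*} [NormedAddCommGroup E]
    [NormedSpace ℝ E] {s : Set E} {f h : E → ℝ} {h' : StrongDual ℝ E} {x z : E}
    (hf : ConvexOn ℝ s f) (hh : HasFDerivAt h h' x) (hmin : IsMinOn (fun w => f w + h w) s x) (hx : x ∈ s)
    (hz : z ∈ s) : f x ≤ f z + h' (z - x) := by
  -- Replacing `f` by its chord on `[x, z]` keeps `0` a minimum, and makes the function smooth.
  set K : ℝ → ℝ := fun t => h (AffineMap.lineMap x z t) + t * (f z - f x)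
  have hK_min : IsMinOn K (Icc 0 1) 0 := by
    refine isMinOn_iff.2 fun t ⟨ht0, ht1⟩ => ?_
    have hconv : f (AffineMap.lineMap x z t) ≤ (1 - t) * f x + t * f z := by
      simpa [AffineMap.lineMap_apply_module] using
        hf.2 hx hz (sub_nonneg.2 ht1) ht0 (sub_add_cancel 1 t)
    have hle := isMinOn_iff.1 hmin _ (hf.1.lineMap_mem hx hz ⟨ht0, ht1⟩)
    simp only [K, AffineMap.lineMap_apply_zero, zero_mul, add_zero]
    linarith
  have hK_deriv : HasDerivAt K (h' (z - x) + (f z - f x)) 0 := by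
    have hline := hh.comp_hasDerivAt_of_eq 0 AffineMap.hasDerivAt_lineMap
      (AffineMap.lineMap_apply_zero x z).symm
    exact hline.add (hasDerivAt_mul_const _)
  have hone_mem : (1 : ℝ) ∈ posTangentConeAt (Icc 0 1) 0 :=
    mem_posTangentConeAt_of_segment_subset (by simp [segment_eq_Icc])
  have hK_deriv_nonneg : 0 ≤ h' (z - x) + (f z - f x) := by
    simpa using hK_min.localize.hasFDerivWithinAt_nonneg
      hK_deriv.hasFDerivAt.hasFDerivWithinAt hone_mem
  linarith

section Bregman

variable {d : ℕ} {φ : EuclideanSpace ℝ (Fin d) → ℝ}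
  {gφ : EuclideanSpace ℝ (Fin d) → EuclideanSpace ℝ (Fin d)}

theorem hasGradientAt_breg_left {x y : EuclideanSpace ℝ (Fin d)}
    (hφ : HasGradientAt φ (gφ x) x) :
    HasGradientAt (fun w => breg φ gφ w y) (gφ x - gφ y) x := by
  rw [hasGradientAt_iff_hasFDerivAt, map_sub]
  set L := InnerProductSpace.toDual ℝ _ (gφ y)
  have hbreg : (fun w => breg φ gφ w y) = fun w => (φ w - φ y) - (L w - ⟪gφ y, y⟫) := by
    ext w
    simp [L, breg, inner_sub_right]
  rw [hbreg]
  exact (hφ.hasFDerivAt.sub_const _).sub (L.hasFDerivAt.sub_const _)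

theorem breg_eq_breg_add_breg_add_inner (x y z : EuclideanSpace ℝ (Fin d)) :
    breg φ gφ z y = breg φ gφ z x + breg φ gφ x y + ⟪gφ x - gφ y, z - x⟫ := by
  simp only [breg, inner_sub_left, inner_sub_right]
  ring

end Bregman

theorem pushback_bregman_general {d : ℕ}
    (C : Set (EuclideanSpace ℝ (Fin d)))
    (φ : EuclideanSpace ℝ (Fin d) → ℝ)
    (gφ : EuclideanSpace ℝ (Fin d) → EuclideanSpace ℝ (Fin d))
    (hgrad : ∀ y ∈ interior C, HasGradientAt φ (gφ y) y)
    (Δ : Set (EuclideanSpace ℝ (Fin d))) (hΔC : Δ ⊆ C)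
    (hΔconv : Convex ℝ Δ)
    (f : EuclideanSpace ℝ (Fin d) → ℝ) (hf : ConvexOn ℝ C f)
    (α : ℝ)
    (y : EuclideanSpace ℝ (Fin d))
    (xstar : EuclideanSpace ℝ (Fin d)) (hxstar : xstar ∈ Δ ∩ interior C)
    (hmin : IsMinOn (fun x => f x + α * breg φ gφ x y) Δ xstar) :
    ∀ z ∈ Δ, f xstar + α * breg φ gφ xstar y
      ≤ f z + α * breg φ gφ z y - α * breg φ gφ z xstar := by
  intro z hz
  have hderiv := (hasGradientAt_breg_left (y := y) (hgrad xstar hxstar.2)).hasFDerivAt.const_mul α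
  have hopt : f xstar ≤ f z + α * ⟪gφ xstar - gφ y, z - xstar⟫ := by
    simpa [inner_sub_left] using
      (hf.subset hΔC hΔconv).le_add_of_isMinOn_add_of_hasFDerivAt hderiv hmin hxstar.1 hz
  rw [breg_eq_breg_add_breg_add_inner xstar y z]
  linarith

/-- **Pushback property of Bregman divergences.**
If `x*` minimizes `x ↦ f(x) + α·D(x,y)` over `Δ` and `x* ∈ Δ° = Δ ∩ int C`, then for
every `z ∈ Δ` one has `f(x*) + α·D(x*,y) ≤ f(z) + α·D(z,y) − α·D(z,x*)`. -/
theorem pushback_bregman {d : ℕ}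
    (C : Set (EuclideanSpace ℝ (Fin d))) (hCconv : Convex ℝ C)
    (hCint : (interior C).Nonempty)
    (φ : EuclideanSpace ℝ (Fin d) → ℝ)
    (gφ : EuclideanSpace ℝ (Fin d) → EuclideanSpace ℝ (Fin d))
    (hgrad : ∀ y ∈ interior C, HasGradientAt φ (gφ y) y)
    (hgcont : ContinuousOn gφ (interior C))
    (Δ : Set (EuclideanSpace ℝ (Fin d))) (hΔC : Δ ⊆ C)
    (hΔcomp : IsCompact Δ) (hΔconv : Convex ℝ Δ)
    (hΔo : (Δ ∩ interior C).Nonempty)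
    (f : EuclideanSpace ℝ (Fin d) → ℝ) (hf : ConvexOn ℝ C f)
    (α : ℝ) (hα : 0 < α)
    (y : EuclideanSpace ℝ (Fin d)) (hy : y ∈ Δ ∩ interior C)
    (xstar : EuclideanSpace ℝ (Fin d)) (hxstar : xstar ∈ Δ ∩ interior C)
    (hmin : IsMinOn (fun x => f x + α * breg φ gφ x y) Δ xstar) :
    ∀ z ∈ Δ, f xstar + α * breg φ gφ xstar y
      ≤ f z + α * breg φ gφ z y - α * breg φ gφ z xstar :=
  pushback_bregman_general C φ gφ hgrad Δ hΔC hΔconv f hf α y xstar hxstar hmin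
end

section
/- Let f : C → ℝ be a convex function, α > 0 and y ∈ Δ°. Suppose x* attains the minimum of x ↦ f(x) + α·D(x,y) over Δ and x* ∈ Δ°. Then there exists a subgradient p of f at x* (i.e. f(u) ≥ f(x*) + ⟨p, u − x*⟩ for all u ∈ C) such that ⟨p + α·∇ω(x*) − α·∇ω(y), z − x*⟩ ≥ 0 for every z ∈ Δ. -/
open scoped RealInnerProductSpace

/-!
Differentiating the objective along the segment from `x*` to `z ∈ Δ` (its convex part bounded by the
chord) shows that `x*` still minimizes `f + ⟪q, ·⟫` over `Δ`, where `q = α(∇ω(x*) - ∇ω(y))` is the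
gradient of the Bregman term. Separating the open strict epigraph of `f + ⟪q, ·⟫` over `int C` from
`Δ × {min}` yields a functional that is a subgradient of `f + ⟪q, ·⟫` at the interior point `x*`
and is nonnegative on `Δ - x*`; subtracting `q` gives `p`.
-/

open Set Filter Topology

theorem ContinuousOn.isOpen_strictEpigraph {X : Type*} [TopologicalSpace X] {U : Set X}
    {G : X → ℝ} (hU : IsOpen U) (hG : ContinuousOn G U) :
    IsOpen {p : X × ℝ | p.1 ∈ U ∧ G p.1 < p.2} := by
  have hcont : ContinuousOn (fun p : X × ℝ => p.2 - G p.1) (U ×ˢ univ) :=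
    continuousOn_snd.sub (hG.comp continuousOn_fst fun p hp => hp.1)
  convert hcont.isOpen_inter_preimage (hU.prod isOpen_univ) (isOpen_Ioi (a := 0)) using 1
  ext p
  simp [sub_pos]

section ConvexMinimization

variable {E : Type*} [NormedAddCommGroup E] [NormedSpace ℝ E]

theorem IsMinOn.isMinOn_add_of_hasFDerivAt {s : Set E} {F h : E → ℝ} {h' : E →L[ℝ] ℝ} {x : E}
    (hF : ConvexOn ℝ s F) (hx : x ∈ s) (hh : HasFDerivAt h h' x)
    (hmin : IsMinOn (fun w => F w + h w) s x) :
    IsMinOn (fun w => F w + h' w) s x := by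
  intro z hz
  set v := z - x
  let g : ℝ → ℝ := fun t => t * (F z - F x) + h (x + t • v)
  have hg_min : IsMinOn g (Icc 0 1) 0 := by
    rintro t ⟨ht0, ht1⟩
    have hseg : x + t • v = (1 - t) • x + t • z := by module
    have hchord : F (x + t • v) ≤ (1 - t) • F x + t • F z := by
      rw [hseg]; exact hF.2 hx hz (by linarith) ht0 (by ring)
    have hval := hmin (show x + t • v ∈ s from hseg ▸ hF.1 hx hz (by linarith) ht0 (by ring))
    simp only [mem_ofPred_eq, smul_eq_mul] at hval hchord
    show g 0 ≤ g t
    simp only [g, zero_smul, add_zero, zero_mul, zero_add]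
    linarith
  have hg_deriv : HasDerivAt g (F z - F x + h' v) 0 := by
    have hline : HasDerivAt (fun t : ℝ => x + t • v) v 0 := by
      simpa using ((hasDerivAt_id (0 : ℝ)).smul_const v).const_add x
    exact (hasDerivAt_mul_const (F z - F x)).add
      (hh.comp_hasDerivAt_of_eq 0 hline (by simp))
  have := hg_min.localize.hasFDerivWithinAt_nonneg
    hg_deriv.hasFDerivAt.hasFDerivWithinAt
    (mem_posTangentConeAt_of_segment_subset (by simp [segment_eq_Icc]) : (1 : ℝ) ∈ _)
  show F x + h' x ≤ F z + h' z
  simp only [ContinuousLinearMap.toSpanSingleton_apply_one, v, map_sub] at this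
  linarith

theorem ConvexOn.exists_subgradient_of_isMinOn {U Δ : Set E} {G : E → ℝ} {x : E}
    (hU : IsOpen U) (hG : ConvexOn ℝ U G) (hGc : ContinuousOn G U) (hxU : x ∈ U)
    (hΔ : Convex ℝ Δ) (hxΔ : x ∈ Δ) (hmin : IsMinOn G Δ x) :
    ∃ ℓ : E →L[ℝ] ℝ, (∀ w ∈ U, G x + ℓ (w - x) ≤ G w) ∧ ∀ z ∈ Δ, 0 ≤ ℓ (z - x) := by
  set S := {p : E × ℝ | p.1 ∈ U ∧ G p.1 < p.2}
  have hdisj : Disjoint S (Δ ×ˢ {G x}) := by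
    rw [disjoint_left]
    rintro ⟨w, t⟩ ⟨-, hlt⟩ ⟨hwΔ, rfl : t = G x⟩
    exact (hmin hwΔ).not_gt hlt
  obtain ⟨L, u, hLS, hLT⟩ := geometric_hahn_banach_open hG.convex_strict_epigraph
    (hGc.isOpen_strictEpigraph hU) (hΔ.prod (convex_singleton _)) hdisj
  set c := L (0, 1)
  set ℓ₀ := L.comp (ContinuousLinearMap.inl ℝ E ℝ)
  have hL : ∀ w t, L (w, t) = ℓ₀ w + t * c := fun w t => by
    rw [← L.comp_inl_add_comp_inr, ← smul_eq_mul, ← map_smul]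
    simp [ℓ₀]
  -- `L < u` on the strict epigraph passes to the graph as `t ↓ G w`
  have hgraph : ∀ w ∈ U, L (w, G w) ≤ u := fun w hw =>
    le_of_tendsto (((L.continuous.comp (Continuous.prodMk_right w)).tendsto (G w)).mono_left
      nhdsWithin_le_nhds)
      (eventually_nhdsWithin_of_forall (s := Ioi (G w)) fun t ht => (hLS (w, t) ⟨hw, ht⟩).le)
  have hΔu : ∀ z ∈ Δ, u ≤ L (z, G x) := fun z hz => hLT _ ⟨hz, rfl⟩
  have hc : c < 0 := by
    have := hLS (x, G x + 1) ⟨hxU, lt_add_one _⟩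
    have := hΔu x hxΔ
    rw [hL] at *
    linarith
  have hcinv : 0 < (-c)⁻¹ := inv_pos.mpr (neg_pos.mpr hc)
  refine ⟨(-c)⁻¹ • ℓ₀, fun w hw => ?_, fun z hz => ?_⟩
  · have h₁ := hgraph w hw
    have h₂ := hΔu x hxΔ
    rw [hL] at h₁ h₂
    have : ℓ₀ (w - x) ≤ -c * (G w - G x) := by rw [map_sub]; linarith
    have := mul_le_mul_of_nonneg_left this hcinv.le
    rw [← mul_assoc, inv_mul_cancel₀ (neg_ne_zero.mpr hc.ne), one_mul] at this
    simp only [FunLike.coe_smul, Pi.smul_apply, smul_eq_mul]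
    linarith
  · have h₁ := hgraph x hxU
    have h₂ := hΔu z hz
    rw [hL] at h₁ h₂
    have : 0 ≤ ℓ₀ (z - x) := by rw [map_sub]; linarith
    exact smul_nonneg hcinv.le this

theorem ConvexOn.subgradient_ineq_of_interior {C : Set E} {G : E → ℝ} {x : E}
    {ℓ : E →L[ℝ] ℝ} (hG : ConvexOn ℝ C G) (hx : x ∈ interior C)
    (hsub : ∀ w ∈ interior C, G x + ℓ (w - x) ≤ G w) {u : E} (hu : u ∈ C) :
    G x + ℓ (u - x) ≤ G u := by
  set m := u + (1 / 2 : ℝ) • (x - u)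
  have hm : m ∈ interior C :=
    hG.1.add_smul_sub_mem_interior' (subset_closure hu) hx ⟨by norm_num, by norm_num⟩
  have hmid : m = (1 / 2 : ℝ) • x + (1 / 2 : ℝ) • u := by module
  have hchord : G m ≤ (1 / 2 : ℝ) • G x + (1 / 2 : ℝ) • G u := by
    rw [hmid]
    exact hG.2 (interior_subset hx) hu (by norm_num) (by norm_num) (by norm_num)
  have hℓ : ℓ (m - x) = (1 / 2 : ℝ) * ℓ (u - x) := by
    rw [show m - x = (1 / 2 : ℝ) • (u - x) by module, map_smul, smul_eq_mul]
  have := hsub m hm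
  simp only [smul_eq_mul] at hchord
  linarith

end ConvexMinimization

theorem hasGradientAt_breg {d : ℕ} {φ : EuclideanSpace ℝ (Fin d) → ℝ}
    {gφ : EuclideanSpace ℝ (Fin d) → EuclideanSpace ℝ (Fin d)} {x : EuclideanSpace ℝ (Fin d)}
    (hφ : HasGradientAt φ (gφ x) x) (y : EuclideanSpace ℝ (Fin d)) :
    HasGradientAt (fun w => breg φ gφ w y) (gφ x - gφ y) x := by
  rw [hasGradientAt_iff_hasFDerivAt, map_sub]
  have hlin : HasFDerivAt (fun w => ⟪gφ y, w - y⟫) (InnerProductSpace.toDual ℝ _ (gφ y)) x :=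
    ((InnerProductSpace.toDual ℝ _ (gφ y)).hasFDerivAt.comp x
      ((hasFDerivAt_id x).sub_const y)).congr_fderiv (by ext; simp)
  exact (hφ.hasFDerivAt.sub_const (φ y)).sub hlin

open InnerProductSpace in
theorem bregman_prox_optimality_general {d : ℕ}
    (C : Set (EuclideanSpace ℝ (Fin d))) (hCconv : Convex ℝ C)
    (φ : EuclideanSpace ℝ (Fin d) → ℝ)
    (gφ : EuclideanSpace ℝ (Fin d) → EuclideanSpace ℝ (Fin d))
    (hgrad : ∀ y ∈ interior C, HasGradientAt φ (gφ y) y)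
    (Δ : Set (EuclideanSpace ℝ (Fin d))) (hΔC : Δ ⊆ C)
    (hΔconv : Convex ℝ Δ)
    (f : EuclideanSpace ℝ (Fin d) → ℝ) (hf : ConvexOn ℝ C f)
    (α : ℝ)
    (y : EuclideanSpace ℝ (Fin d))
    (xstar : EuclideanSpace ℝ (Fin d)) (hxstar : xstar ∈ Δ ∩ interior C)
    (hmin : IsMinOn (fun x => f x + α * breg φ gφ x y) Δ xstar) :
    ∃ p : EuclideanSpace ℝ (Fin d),
      (∀ u ∈ C, f xstar + ⟪p, u - xstar⟫ ≤ f u) ∧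
      ∀ z ∈ Δ, 0 ≤ ⟪p + α • gφ xstar - α • gφ y, z - xstar⟫ := by
  set q := α • gφ xstar - α • gφ y
  have hq : HasFDerivAt (fun w => α * breg φ gφ w y) (toDual ℝ _ q) xstar := by
    have := (hasGradientAt_breg (hgrad xstar hxstar.2) y).hasFDerivAt.const_mul α
    rwa [← map_smul, smul_sub] at this
  set G := fun w => f w + toDual ℝ _ q w
  have hG : ConvexOn ℝ C G := hf.add ((toDual ℝ _ q).toLinearMap.convexOn hCconv)
  have hGmin : IsMinOn G Δ xstar :=
    hmin.isMinOn_add_of_hasFDerivAt (hf.subset hΔC hΔconv) hxstar.1 hq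
  obtain ⟨ℓ, hsub, hnormal⟩ :=
    (hG.subset interior_subset hCconv.interior).exists_subgradient_of_isMinOn isOpen_interior
      hG.continuousOn_interior hxstar.2 hΔconv hxstar.1 hGmin
  refine ⟨(toDual ℝ _).symm ℓ - q, fun u hu => ?_, fun z hz => ?_⟩
  · have := hG.subgradient_ineq_of_interior hxstar.2 hsub hu
    simp only [G, toDual_apply_apply] at this
    rw [inner_sub_left, toDual_symm_apply, inner_sub_right]
    linarith
  · rw [show (toDual ℝ _).symm ℓ - q + α • gφ xstar - α • gφ y = (toDual ℝ _).symm ℓ by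
      rw [add_sub_assoc, sub_add_cancel], toDual_symm_apply]
    exact hnormal z hz

/-- **Optimality condition for the Bregman proximal step.**
If `x*` minimizes `x ↦ f(x) + α·D(x,y)` over `Δ` and `x* ∈ Δ° = Δ ∩ int C`, then there
is a subgradient `p` of `f` at `x*` such that
`⟪p + α·∇ω(x*) − α·∇ω(y), z − x*⟫ ≥ 0` for every `z ∈ Δ`. -/
theorem bregman_prox_optimality {d : ℕ}
    (C : Set (EuclideanSpace ℝ (Fin d))) (hCconv : Convex ℝ C)
    (hCint : (interior C).Nonempty)
    (φ : EuclideanSpace ℝ (Fin d) → ℝ)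
    (gφ : EuclideanSpace ℝ (Fin d) → EuclideanSpace ℝ (Fin d))
    (hgrad : ∀ y ∈ interior C, HasGradientAt φ (gφ y) y)
    (hgcont : ContinuousOn gφ (interior C))
    (Δ : Set (EuclideanSpace ℝ (Fin d))) (hΔC : Δ ⊆ C)
    (hΔcomp : IsCompact Δ) (hΔconv : Convex ℝ Δ)
    (hΔo : (Δ ∩ interior C).Nonempty)
    (f : EuclideanSpace ℝ (Fin d) → ℝ) (hf : ConvexOn ℝ C f)
    (α : ℝ) (hα : 0 < α)
    (y : EuclideanSpace ℝ (Fin d)) (hy : y ∈ Δ ∩ interior C)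
    (xstar : EuclideanSpace ℝ (Fin d)) (hxstar : xstar ∈ Δ ∩ interior C)
    (hmin : IsMinOn (fun x => f x + α * breg φ gφ x y) Δ xstar) :
    ∃ p : EuclideanSpace ℝ (Fin d),
      (∀ u ∈ C, f xstar + ⟪p, u - xstar⟫ ≤ f u) ∧
      ∀ z ∈ Δ, 0 ≤ ⟪p + α • gφ xstar - α • gφ y, z - xstar⟫ :=
  bregman_prox_optimality_general C hCconv φ gφ hgrad Δ hΔC hΔconv f hf α y xstar hxstar hmin
end

section
/- Suppose Λ* := argmax_{x∈X} F(x) is nonempty and bounded. Then there exist constants c₀ > 0 and ℓ₀ > 0 such that F satisfies the weak error bound condition with constants c₀, ℓ₀; that is, for every x ∈ X with dist(x, Λ*) ≥ ℓ₀ and every x* ∈ Λ*, one has F(x*) − F(x) ≥ c₀ · dist(x, Λ*). -/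
/-!
Let `M` be the maximal value and `d = dist(x, Λ*) ≥ 1`. On the segment from the nearest
maximizer `p` to `x`, the point `y` at parameter `1 / d` lies at distance exactly `1` from `Λ*`,
and concavity gives `M - F y ≤ (M - F x) / d`. The points of `X` at distance `1` from the
bounded set `Λ*` form a compact set on which the continuous gap `M - F` is positive, so it is
bounded below by some `c₀ > 0`; hence `c₀ · d ≤ M - F x`.
-/

open Metric Bornology Set AffineMap

section Maximizers

variable {α : Type*} {X : Set α} {F : α → ℝ}

def maximizers (X : Set α) (F : α → ℝ) : Set α := {x | x ∈ X ∧ ∀ y ∈ X, F y ≤ F x}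

theorem apply_eq_of_mem_maximizers {p q : α} (hp : p ∈ maximizers X F)
    (hq : q ∈ maximizers X F) : F p = F q :=
  le_antisymm (hq.2 p hp.1) (hp.2 q hq.1)

theorem apply_lt_of_notMem_maximizers {p y : α} (hp : p ∈ maximizers X F) (hy : y ∈ X)
    (hyS : y ∉ maximizers X F) : F y < F p := by
  by_contra! h
  exact hyS ⟨hy, fun w hw => (hp.2 w hw).trans h⟩

theorem isClosed_maximizers [TopologicalSpace α] (hX : IsClosed X) (hF : ContinuousOn F X) :
    IsClosed (maximizers X F) := by
  have : maximizers X F = X ∩ ⋂ y ∈ X, X ∩ F ⁻¹' Ici (F y) := by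
    ext x
    simp only [maximizers, mem_ofPred_eq, mem_inter_iff, mem_iInter, mem_preimage, mem_Ici]
    exact ⟨fun h => ⟨h.1, fun y hy => ⟨h.1, h.2 y hy⟩⟩, fun h => ⟨h.1, fun y hy => (h.2 y hy).2⟩⟩
  rw [this]
  exact hX.inter (isClosed_biInter fun y _ => hF.preimage_isClosed_of_isClosed hX isClosed_Ici)

theorem ConcaveOn.sub_lineMap_le_of_mem_maximizers {E : Type*} [AddCommGroup E] [Module ℝ E]
    {X : Set E} {F : E → ℝ} (hF : ConcaveOn ℝ X F) {p x : E}
    (hp : p ∈ maximizers X F) (hx : x ∈ X) {t : ℝ} (ht : t ∈ Icc (0 : ℝ) 1) :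
    F p - F (lineMap p x t) ≤ t * (F p - F x) := by
  have := hF.2 hp.1 hx (sub_nonneg.2 ht.2) ht.1 (by ring)
  simp only [smul_eq_mul] at this
  rw [lineMap_apply_module]
  linarith

end Maximizers

theorem infDist_lineMap_eq_mul {E : Type*} [NormedAddCommGroup E] [NormedSpace ℝ E]
    {S : Set E} {p x : E} (hp : p ∈ S) (hx : infDist x S = dist x p) {t : ℝ}
    (ht : t ∈ Icc (0 : ℝ) 1) : infDist (lineMap p x t) S = t * infDist x S := by
  have hleft : dist (lineMap p x t) p = t * infDist x S := by
    rw [dist_lineMap_left, Real.norm_of_nonneg ht.1, hx, dist_comm]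
  have hright : dist x (lineMap p x t) = (1 - t) * infDist x S := by
    rw [dist_comm, dist_lineMap_right, Real.norm_of_nonneg (sub_nonneg.2 ht.2), hx, dist_comm]
  refine le_antisymm (hleft ▸ infDist_le_dist_of_mem hp) ?_
  have := infDist_le_infDist_add_dist (x := x) (y := lineMap p x t) (s := S)
  rw [hright] at this
  linarith

theorem isCompact_setOf_infDist_eq {E : Type*} [PseudoMetricSpace E] [ProperSpace E]
    {X S : Set E} (hX : IsClosed X) (hS : IsBounded S) (hSne : S.Nonempty) (r : ℝ) :
    IsCompact {y | y ∈ X ∧ infDist y S = r} := by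
  refine isCompact_of_isClosed_isBounded
    (hX.inter (isClosed_singleton.preimage (continuous_infDist_pt S)))
    ((hS.thickening (δ := r + 1)).subset ?_)
  rintro y ⟨-, hy⟩
  rw [mem_thickening_iff_infDist_lt hSne, hy]
  linarith

section WeakErrorBound

variable {E : Type*} [NormedAddCommGroup E] [NormedSpace ℝ E] [ProperSpace E]
  {X : Set E} {F : E → ℝ}

theorem ConcaveOn.exists_infDist_maximizers_eq_mul_sub_le (hX : Convex ℝ X)
    (hF : ConcaveOn ℝ X F) (hS : IsClosed (maximizers X F)) {z x : E}
    (hz : z ∈ maximizers X F) (hx : x ∈ X) {r : ℝ} (hr : 0 < r)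
    (hrx : r ≤ infDist x (maximizers X F)) :
    ∃ y ∈ X, infDist y (maximizers X F) = r ∧
      infDist x (maximizers X F) * (F z - F y) ≤ r * (F z - F x) := by
  set d := infDist x (maximizers X F)
  obtain ⟨p, hp, hpx⟩ := hS.exists_infDist_eq_dist ⟨z, hz⟩ x
  have hd : 0 < d := hr.trans_le hrx
  have ht : r / d ∈ Icc (0 : ℝ) 1 := ⟨by positivity, (div_le_one hd).2 hrx⟩
  have htd : r / d * d = r := div_mul_cancel₀ r hd.ne'
  refine ⟨lineMap p x (r / d), hX.lineMap_mem hp.1 hx ht, ?_, ?_⟩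
  · rw [infDist_lineMap_eq_mul hp hpx ht, htd]
  · have hgap := hF.sub_lineMap_le_of_mem_maximizers hp hx ht
    rw [apply_eq_of_mem_maximizers hp hz] at hgap
    calc d * (F z - F (lineMap p x (r / d))) ≤ d * (r / d * (F z - F x)) :=
          mul_le_mul_of_nonneg_left hgap hd.le
      _ = r * (F z - F x) := by rw [← mul_assoc, mul_comm d, htd]

theorem ConcaveOn.exists_mul_infDist_maximizers_le (hXc : IsClosed X) (hX : Convex ℝ X)
    (hFc : ContinuousOn F X) (hF : ConcaveOn ℝ X F) (hne : (maximizers X F).Nonempty)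
    (hbdd : IsBounded (maximizers X F)) :
    ∃ c₀ > (0 : ℝ), ∃ ℓ₀ > (0 : ℝ), ∀ x ∈ X, ℓ₀ ≤ infDist x (maximizers X F) →
      ∀ xstar ∈ maximizers X F, c₀ * infDist x (maximizers X F) ≤ F xstar - F x := by
  obtain ⟨z, hz⟩ := hne
  have hgap_pos : ∀ y ∈ {y | y ∈ X ∧ infDist y (maximizers X F) = 1}, 0 < F z - F y := by
    rintro y ⟨hyX, hy⟩
    refine sub_pos.2 (apply_lt_of_notMem_maximizers hz hyX fun hyS => ?_)
    simp [infDist_zero_of_mem hyS] at hy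
  obtain ⟨c₀, hc₀, hc₀_le⟩ := (isCompact_setOf_infDist_eq hXc hbdd ⟨z, hz⟩ 1).exists_forall_le'
    (continuousOn_const.sub (hFc.mono fun y hy => hy.1)) hgap_pos
  refine ⟨c₀, hc₀, 1, one_pos, fun x hx hd xstar hxstar => ?_⟩
  obtain ⟨y, hyX, hy, hle⟩ :=
    hF.exists_infDist_maximizers_eq_mul_sub_le hX (isClosed_maximizers hXc hFc) hz hx one_pos hd
  rw [apply_eq_of_mem_maximizers hxstar hz]
  calc c₀ * infDist x (maximizers X F) ≤ (F z - F y) * infDist x (maximizers X F) :=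
        mul_le_mul_of_nonneg_right (hc₀_le y ⟨hyX, hy⟩) (zero_le_one.trans hd)
    _ ≤ F z - F x := by linarith

end WeakErrorBound

theorem weak_error_bound_of_bounded_argmax_general {n : ℕ}
    (X : Set (EuclideanSpace ℝ (Fin n)))
    (hXclosed : IsClosed X) (hXconv : Convex ℝ X)
    (F : EuclideanSpace ℝ (Fin n) → ℝ)
    (hFcont : ContinuousOn F X) (hFconc : ConcaveOn ℝ X F)
    (hne : {x | x ∈ X ∧ ∀ y ∈ X, F y ≤ F x}.Nonempty)
    (hbdd : Bornology.IsBounded {x | x ∈ X ∧ ∀ y ∈ X, F y ≤ F x}) :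
    ∃ c₀ > (0 : ℝ), ∃ ℓ₀ > (0 : ℝ), ∀ x ∈ X,
      ℓ₀ ≤ Metric.infDist x {x | x ∈ X ∧ ∀ y ∈ X, F y ≤ F x} →
      ∀ xstar ∈ {x | x ∈ X ∧ ∀ y ∈ X, F y ≤ F x},
        c₀ * Metric.infDist x {x | x ∈ X ∧ ∀ y ∈ X, F y ≤ F x} ≤ F xstar - F x :=
  hFconc.exists_mul_infDist_maximizers_le hXclosed hXconv hFcont hne hbdd

/-- **Nonempty bounded maximizer set implies the weak error bound condition.**
If `F` is concave and continuous on the nonempty closed convex set `X ⊆ ℝⁿ` and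
`Λ* = argmax_{x∈X} F(x)` is nonempty and bounded, then there exist `c₀, ℓ₀ > 0` such
that `F(x*) − F(x) ≥ c₀·dist(x, Λ*)` whenever `x ∈ X` with `dist(x, Λ*) ≥ ℓ₀` and
`x* ∈ Λ*`. -/
theorem weak_error_bound_of_bounded_argmax {n : ℕ}
    (X : Set (EuclideanSpace ℝ (Fin n))) (hXne : X.Nonempty)
    (hXclosed : IsClosed X) (hXconv : Convex ℝ X)
    (F : EuclideanSpace ℝ (Fin n) → ℝ)
    (hFcont : ContinuousOn F X) (hFconc : ConcaveOn ℝ X F)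
    (hne : {x | x ∈ X ∧ ∀ y ∈ X, F y ≤ F x}.Nonempty)
    (hbdd : Bornology.IsBounded {x | x ∈ X ∧ ∀ y ∈ X, F y ≤ F x}) :
    ∃ c₀ > (0 : ℝ), ∃ ℓ₀ > (0 : ℝ), ∀ x ∈ X,
      ℓ₀ ≤ Metric.infDist x {x | x ∈ X ∧ ∀ y ∈ X, F y ≤ F x} →
      ∀ xstar ∈ {x | x ∈ X ∧ ∀ y ∈ X, F y ≤ F x},
        c₀ * Metric.infDist x {x | x ∈ X ∧ ∀ y ∈ X, F y ≤ F x} ≤ F xstar - F x :=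
  weak_error_bound_of_bounded_argmax_general X hXclosed hXconv F hFcont hFconc hne hbdd
end

section
/- Suppose Λ* := argmax_{x∈X} F(x) is nonempty, let F* be the maximum value of F over X, and suppose F satisfies the error bound condition with parameters β ∈ (0,1], δ > 0 and C_δ > 0, i.e. dist(x, Λ*) ≤ C_δ · (F* − F(x))^β for every x in the δ-superlevel set S_δ := {x ∈ X : F* − F(x) ≤ δ}. Then for every x ∈ X with dist(x, Λ*) ≥ C_δ · δ^β one has dist(x, Λ*) ≤ C_δ · δ^{β−1} · (F* − F(x)). -/
/-!
Let `g = F* − F ≥ 0` be the optimality gap and `Λ*` the maximizer set. A point `x` with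
`dist(x, Λ*) ≥ C_δ δ^β` has gap `g(x) ≥ δ`, since otherwise the error bound would give
`dist(x, Λ*) < C_δ δ^β`. Shrink `x` towards any maximizer `z` by the factor `t = δ / g(x)`:
by concavity the gap of `y = z + t (x − z)` is at most `t g(x) = δ`, so the error bound gives
`dist(y, Λ*) ≤ C_δ δ^β`, while `dist(x, y) = (1 − t) ‖x − z‖`. Letting `z` run through `Λ*`
yields `t · dist(x, Λ*) ≤ C_δ δ^β`, which is the claim.
-/

open AffineMap Metric

theorem ConcaveOn.sub_map_lineMap_le {E : Type*} [AddCommGroup E] [Module ℝ E] {X : Set E}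
    {F : E → ℝ} (hF : ConcaveOn ℝ X F) {z x : E} (hz : z ∈ X) (hx : x ∈ X) {t : ℝ}
    (ht₀ : 0 ≤ t) (ht₁ : t ≤ 1) :
    F z - F (lineMap z x t) ≤ t * (F z - F x) := by
  have h := hF.2 hz hx (sub_nonneg.2 ht₁) ht₀ (sub_add_cancel 1 t)
  rw [smul_eq_mul, smul_eq_mul, ← lineMap_apply_module] at h
  linarith

theorem mul_infDist_le_of_forall_lineMap {E : Type*} [NormedAddCommGroup E] [NormedSpace ℝ E]
    {S : Set E} (hS : S.Nonempty) {x : E} {t c : ℝ} (ht₀ : 0 ≤ t) (ht₁ : t ≤ 1)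
    (h : ∀ z ∈ S, infDist (lineMap z x t) S ≤ c) :
    t * infDist x S ≤ c := by
  refine le_of_forall_pos_le_add fun ε hε => ?_
  obtain ⟨z, hzS, hxz⟩ := (infDist_lt_iff hS).1 (lt_add_of_pos_right (infDist x S) hε)
  have hdist : dist x (lineMap z x t) = (1 - t) * dist x z := by
    rw [dist_right_lineMap, Real.norm_of_nonneg (sub_nonneg.2 ht₁), dist_comm]
  have hle : infDist x S ≤ c + (1 - t) * (infDist x S + ε) :=
    calc infDist x S ≤ infDist (lineMap z x t) S + dist x (lineMap z x t) :=
          infDist_le_infDist_add_dist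
      _ ≤ c + (1 - t) * (infDist x S + ε) := by
          rw [hdist]
          exact add_le_add (h z hzS) (mul_le_mul_of_nonneg_left hxz.le (sub_nonneg.2 ht₁))
  linarith [mul_nonneg ht₀ hε.le]

theorem ebc_implies_weak_ebc_general {n : ℕ}
    (X : Set (EuclideanSpace ℝ (Fin n))) (hXconv : Convex ℝ X)
    (F : EuclideanSpace ℝ (Fin n) → ℝ)
    (hFconc : ConcaveOn ℝ X F)
    (xstar : EuclideanSpace ℝ (Fin n))
    (hxstar : xstar ∈ {z | z ∈ X ∧ ∀ y ∈ X, F y ≤ F z})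
    (Fstar : ℝ) (hFstar : Fstar = F xstar)
    (β δ Cδ : ℝ) (hβ0 : 0 < β) (hδ : 0 < δ) (hCδ : 0 < Cδ)
    (hEBC : ∀ x ∈ X, Fstar - F x ≤ δ →
      Metric.infDist x {z | z ∈ X ∧ ∀ y ∈ X, F y ≤ F z} ≤ Cδ * (Fstar - F x) ^ β) :
    ∀ x ∈ X, Cδ * δ ^ β ≤ Metric.infDist x {z | z ∈ X ∧ ∀ y ∈ X, F y ≤ F z} →
      Metric.infDist x {z | z ∈ X ∧ ∀ y ∈ X, F y ≤ F z}
        ≤ Cδ * δ ^ (β - 1) * (Fstar - F x) := by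
  intro x hx hxd
  set S := {z | z ∈ X ∧ ∀ y ∈ X, F y ≤ F z}
  have hgap_nonneg : ∀ y ∈ X, 0 ≤ Fstar - F y := fun y hy => by
    linarith [hxstar.2 y hy]
  have hmax : ∀ z ∈ S, F z = Fstar := fun z hz =>
    hFstar ▸ le_antisymm (hxstar.2 z hz.1) (hz.2 xstar hxstar.1)
  have hgap : δ ≤ Fstar - F x := by
    by_contra! hlt
    have := mul_lt_mul_of_pos_left (Real.rpow_lt_rpow (hgap_nonneg x hx) hlt hβ0) hCδ
    linarith [hEBC x hx hlt.le]
  have hgap_pos : 0 < Fstar - F x := hδ.trans_le hgap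
  set t := δ / (Fstar - F x)
  have ht₀ : 0 ≤ t := div_nonneg hδ.le hgap_pos.le
  have ht₁ : t ≤ 1 := (div_le_one hgap_pos).2 hgap
  have hshrink : ∀ z ∈ S, infDist (lineMap z x t) S ≤ Cδ * δ ^ β := fun z hz => by
    have hyX := hXconv.lineMap_mem hz.1 hx ⟨ht₀, ht₁⟩
    have hgap_y : Fstar - F (lineMap z x t) ≤ δ := by
      have := hFconc.sub_map_lineMap_le hz.1 hx ht₀ ht₁
      rwa [hmax z hz, div_mul_cancel₀ δ hgap_pos.ne'] at this
    exact (hEBC _ hyX hgap_y).trans <| mul_le_mul_of_nonneg_left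
      (Real.rpow_le_rpow (hgap_nonneg _ hyX) hgap_y hβ0.le) hCδ.le
  have hmain := mul_infDist_le_of_forall_lineMap ⟨xstar, hxstar⟩ ht₀ ht₁ hshrink
  rw [div_mul_eq_mul_div, div_le_iff₀ hgap_pos] at hmain
  rw [Real.rpow_sub_one hδ.ne', mul_div_assoc', div_mul_eq_mul_div, le_div_iff₀ hδ]
  linarith

/-- **The classical error bound condition implies a global linear bound away from the
maximizer set.** If `F` satisfies the error bound condition with parameters
`β ∈ (0,1]`, `δ > 0`, `C_δ > 0` on its `δ`-superlevel set, then every `x ∈ X` with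
`dist(x, Λ*) ≥ C_δ·δ^β` satisfies `dist(x, Λ*) ≤ C_δ·δ^{β−1}·(F* − F(x))`. -/
theorem ebc_implies_weak_ebc {n : ℕ}
    (X : Set (EuclideanSpace ℝ (Fin n))) (hXne : X.Nonempty)
    (hXclosed : IsClosed X) (hXconv : Convex ℝ X)
    (F : EuclideanSpace ℝ (Fin n) → ℝ)
    (hFcont : ContinuousOn F X) (hFconc : ConcaveOn ℝ X F)
    (xstar : EuclideanSpace ℝ (Fin n))
    (hxstar : xstar ∈ {z | z ∈ X ∧ ∀ y ∈ X, F y ≤ F z})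
    (Fstar : ℝ) (hFstar : Fstar = F xstar)
    (β δ Cδ : ℝ) (hβ0 : 0 < β) (hβ1 : β ≤ 1) (hδ : 0 < δ) (hCδ : 0 < Cδ)
    (hEBC : ∀ x ∈ X, Fstar - F x ≤ δ →
      Metric.infDist x {z | z ∈ X ∧ ∀ y ∈ X, F y ≤ F z} ≤ Cδ * (Fstar - F x) ^ β) :
    ∀ x ∈ X, Cδ * δ ^ β ≤ Metric.infDist x {z | z ∈ X ∧ ∀ y ∈ X, F y ≤ F z} →
      Metric.infDist x {z | z ∈ X ∧ ∀ y ∈ X, F y ≤ F z}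
        ≤ Cδ * δ ^ (β - 1) * (Fstar - F x) :=
  ebc_implies_weak_ebc_general X hXconv F hFconc xstar hxstar Fstar hFstar β δ Cδ hβ0 hδ hCδ hEBC
end

section
/- Let μ₁, μ₂ ∈ Δ with μ₂ entrywise strictly positive, let θ ∈ (0,1], and set μ̃₂ := (1−θ)·μ₂ + (θ/d)·1 where 1 is the all-ones vector. Then D(μ₁, μ̃₂) − D(μ₁, μ₂) ≤ θ · log d, and moreover D(μ₁, μ̃₂) ≤ log(d/θ). -/
/-!
Both bounds are bounds on a `μ₁`-average, so it suffices to bound the averaged terms pointwise.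
The difference of the divergences averages `log (μ₂ i / μ̃₂ i)`, and concavity of `log` gives
`log μ̃₂ i ≥ (1 - θ) log μ₂ i - θ log d`, whence `log (μ₂ i / μ̃₂ i) ≤ θ log μ₂ i + θ log d ≤ θ log d`.
The divergence `D(μ₁, μ̃₂)` averages `log (μ₁ i / μ̃₂ i)`, and `μ₁ i ≤ 1 ≤ (d / θ) μ̃₂ i`.
-/

/-- Kullback–Leibler divergence on ℝ^d (with the convention `0·log 0 = 0`, which holds
automatically since multiplication by zero gives zero). -/
noncomputable def klDiv {d : ℕ} (μ₁ μ₂ : Fin d → ℝ) : ℝ :=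
  ∑ i, μ₁ i * Real.log (μ₁ i / μ₂ i)

open Real Finset

lemma le_one_of_sum_eq_one {ι : Type*} [Fintype ι] {w : ι → ℝ} (hw : ∀ i, 0 ≤ w i)
    (hsum : ∑ i, w i = 1) (i : ι) : w i ≤ 1 :=
  hsum ▸ single_le_sum (fun j _ => hw j) (mem_univ i)

lemma sum_mul_le_of_forall_pos_imp_le {ι : Type*} [Fintype ι] {w f : ι → ℝ} {c : ℝ}
    (hw : ∀ i, 0 ≤ w i) (hsum : ∑ i, w i = 1) (hf : ∀ i, 0 < w i → f i ≤ c) :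
    ∑ i, w i * f i ≤ c :=
  calc ∑ i, w i * f i ≤ ∑ i, w i * c := by
        refine sum_le_sum fun i _ => ?_
        rcases (hw i).eq_or_lt with hi | hi
        · simp [← hi]
        · exact mul_le_mul_of_nonneg_left (hf i hi) (hw i)
    _ = c := by rw [← sum_mul, hsum, one_mul]

lemma klDiv_sub_klDiv {d : ℕ} (μ ν ρ : Fin d → ℝ) (hν : ∀ i, ν i ≠ 0) (hρ : ∀ i, ρ i ≠ 0) :
    klDiv μ ν - klDiv μ ρ = ∑ i, μ i * log (ρ i / ν i) := by
  rw [klDiv, klDiv, ← sum_sub_distrib]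
  refine sum_congr rfl fun i _ => ?_
  rcases eq_or_ne (μ i) 0 with hi | hi
  · simp [hi]
  · rw [log_div hi (hν i), log_div hi (hρ i), log_div (hρ i) (hν i)]
    ring

lemma log_div_mix_uniform_le {x θ d : ℝ} (hx0 : 0 < x) (hx1 : x ≤ 1) (hθ0 : 0 < θ) (hθ1 : θ ≤ 1)
    (hd : 0 < d) : log (x / ((1 - θ) * x + θ / d)) ≤ θ * log d := by
  have hconcave := strictConcaveOn_log_Ioi.concaveOn.2 (Set.mem_Ioi.2 hx0)
    (Set.mem_Ioi.2 (inv_pos.2 hd)) (sub_nonneg.2 hθ1) hθ0.le (sub_add_cancel 1 θ)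
  simp only [smul_eq_mul, log_inv, ← div_eq_mul_inv] at hconcave
  have hmix : 0 < (1 - θ) * x + θ / d :=
    add_pos_of_nonneg_of_pos (mul_nonneg (sub_nonneg.2 hθ1) hx0.le) (div_pos hθ0 hd)
  have hθlog : θ * log x ≤ 0 := mul_nonpos_of_nonneg_of_nonpos hθ0.le (log_nonpos hx0.le hx1)
  rw [log_div hx0.ne' hmix.ne']
  linarith

lemma log_div_le_log_inv {a b m : ℝ} (ha0 : 0 < a) (ha1 : a ≤ 1) (hb : 0 < b) (hm : b ≤ m) :
    log (a / m) ≤ log b⁻¹ :=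
  log_le_log (div_pos ha0 (hb.trans_le hm)) <| by
    simpa only [one_div] using div_le_div₀ zero_le_one ha1 hb hm

/-- **Effect of mixing with the uniform distribution on the KL divergence.**
For `μ₁, μ₂` in the probability simplex with `μ₂` entrywise positive, `θ ∈ (0,1]` and
`μ̃₂ = (1−θ)·μ₂ + (θ/d)·1`, one has `D(μ₁, μ̃₂) − D(μ₁, μ₂) ≤ θ·log d` and
`D(μ₁, μ̃₂) ≤ log(d/θ)`. -/
theorem kl_mixing_bounds {d : ℕ} (hd : 1 ≤ d)
    (μ₁ μ₂ : Fin d → ℝ)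
    (hμ₁ : (∀ i, 0 ≤ μ₁ i) ∧ ∑ i, μ₁ i = 1)
    (hμ₂ : (∀ i, 0 < μ₂ i) ∧ ∑ i, μ₂ i = 1)
    (θ : ℝ) (hθ0 : 0 < θ) (hθ1 : θ ≤ 1)
    (μt₂ : Fin d → ℝ) (hμt₂ : ∀ i, μt₂ i = (1 - θ) * μ₂ i + θ / d) :
    klDiv μ₁ μt₂ - klDiv μ₁ μ₂ ≤ θ * Real.log d ∧
    klDiv μ₁ μt₂ ≤ Real.log (d / θ) := by
  obtain ⟨hμ₁_nonneg, hμ₁_sum⟩ := hμ₁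
  obtain ⟨hμ₂_pos, hμ₂_sum⟩ := hμ₂
  have hd_pos : (0 : ℝ) < d := by exact_mod_cast hd
  have hμt₂_ge : ∀ i, θ / d ≤ μt₂ i := fun i => by
    rw [hμt₂ i]
    exact le_add_of_nonneg_left (mul_nonneg (sub_nonneg.2 hθ1) (hμ₂_pos i).le)
  have hμt₂_pos : ∀ i, 0 < μt₂ i := fun i => (div_pos hθ0 hd_pos).trans_le (hμt₂_ge i)
  constructor
  · rw [klDiv_sub_klDiv μ₁ μt₂ μ₂ (fun i => (hμt₂_pos i).ne') (fun i => (hμ₂_pos i).ne')]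
    refine sum_mul_le_of_forall_pos_imp_le hμ₁_nonneg hμ₁_sum fun i _ => ?_
    rw [hμt₂ i]
    exact log_div_mix_uniform_le (hμ₂_pos i) (le_one_of_sum_eq_one (fun j => (hμ₂_pos j).le)
      hμ₂_sum i) hθ0 hθ1 hd_pos
  · refine sum_mul_le_of_forall_pos_imp_le hμ₁_nonneg hμ₁_sum fun i hi => ?_
    rw [← inv_div θ]
    exact log_div_le_log_inv hi (le_one_of_sum_eq_one hμ₁_nonneg hμ₁_sum i)
      (div_pos hθ0 hd_pos) (hμt₂_ge i)
end

section
/- Fix V, α > 0, a point x ∈ Δ°, scalars Q₁,...,Q_L ≥ 0 and H₁,...,H_M ∈ ℝ. Let f, g₁,...,g_L : C → ℝ be convex, let p_f be a subgradient of f at x and p_i a subgradient of g_i at x with Σ_{i=1}^L ‖p_i‖_*² ≤ D₂², and suppose Σ_{i=1}^L |g_i(μ)|² ≤ G² for all μ ∈ Δ. Let h₁,...,h_M ∈ ℝ^d with Σ_{j=1}^M ‖h_j‖_*² ≤ H², and let b ∈ ℝ^M with Σ_{j=1}^M b_j² ≤ 2RH²/β. Suppose x⁺ attains the minimum over Δ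 of μ ↦ ⟨V·p_f + Σ_i Q_i·p_i + Σ_j H_j·h_j, μ⟩ + α·D(μ, x), with x⁺ ∈ Δ°. Define Q_i⁺ := max{Q_i + g_i(x) + ⟨p_i, x⁺ − x⟩, 0}, H_j⁺ := H_j + ⟨h_j, x⁺⟩ − b_j, and Δdrift := (‖Q⁺‖₂² − ‖Q‖₂²)/2 + (‖H⁺‖₂² − ‖H‖₂²)/2. Then for every μ ∈ Δ: V·⟨p_f, x⁺ − x⟩ + Δdrift + α·D(x⁺, x) ≤ V·(f(μ) − f(x)) + Σ_{i=1}^L Q_i·g_i(μ) + Σ_{j=1}^M H_j·(⟨h_j, μ⟩ − b_j) + α·D(μ, x) − α·D(μ, x⁺) + 4RH²/β + G² + 2RD₂²/β. -/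
/-!
Write `s = V p_f + ∑ Qᵢ pᵢ + ∑ Hⱼ hⱼ`. The first-order condition for `x⁺` together with the
three-point identity of the Bregman divergence gives
`⟪s, x⁺ - x⟫ + α D(x⁺, x) ≤ ⟪s, μ - x⟫ + α D(μ, x) - α D(μ, x⁺)`.
Expanding the squares of the queue updates bounds the drift by
`∑ Qᵢ (gᵢ(x) + ⟪pᵢ, x⁺ - x⟫) + ∑ Hⱼ (⟪hⱼ, x⁺⟫ - bⱼ)` plus the squared increments; the latter are
controlled by `⟪v, z⟫ ≤ ‖v‖_* ‖z‖` and the diameter bounds on `Δ`. The subgradient inequalities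
at `μ` then turn the linear terms evaluated at `μ` into `f(μ) - f(x)` and `gᵢ(μ)`.
-/

open scoped RealInnerProductSpace

/-- Dual norm `‖v‖_* = sup_{‖y‖ ≤ 1} ⟪v, y⟫` associated with a primal norm `nrm`. -/
noncomputable def dualNorm {d : ℕ} (nrm : EuclideanSpace ℝ (Fin d) → ℝ)
    (v : EuclideanSpace ℝ (Fin d)) : ℝ :=
  sSup ((fun y => ⟪v, y⟫) '' {y | nrm y ≤ 1})

theorem Seminorm.exists_pos_mul_norm_le {E : Type*} [NormedAddCommGroup E] [NormedSpace ℝ E]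
    [FiniteDimensional ℝ E] (p : Seminorm ℝ E) (hp : ∀ x, p x = 0 → x = 0) :
    ∃ c, 0 < c ∧ ∀ y, c * ‖y‖ ≤ p y := by
  rcases subsingleton_or_nontrivial E with _ | _
  · exact ⟨1, one_pos, fun y => by simp [Subsingleton.elim y 0]⟩
  obtain ⟨y₀, hy₀, hmin⟩ := (isCompact_sphere (0 : E) 1).exists_isMinOn
    (NormedSpace.sphere_nonempty.2 zero_le_one) p.convexOn.locallyLipschitz.continuous.continuousOn
  have hy₀0 : y₀ ≠ 0 := ne_zero_of_mem_unit_sphere ⟨y₀, hy₀⟩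
  refine ⟨p y₀, (apply_nonneg p y₀).lt_of_ne' (mt (hp y₀) hy₀0), fun y => ?_⟩
  rcases eq_or_ne y 0 with rfl | hy
  · simp
  have hy' : 0 < ‖y‖ := norm_pos_iff.2 hy
  have hle : p y₀ ≤ p (‖y‖⁻¹ • y) := hmin (by simp [norm_smul, hy'.ne'])
  rwa [map_smul_eq_mul, norm_inv, norm_norm, le_inv_mul_iff₀' hy'] at hle

section DualNorm

variable {d : ℕ} (p : Seminorm ℝ (EuclideanSpace ℝ (Fin d)))

/- `dualNorm` is an `sSup`, which is the junk value `0` unless this set is bounded. -/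
theorem bddAbove_inner_image_seminorm_le_one (hp : ∀ x, p x = 0 → x = 0)
    (v : EuclideanSpace ℝ (Fin d)) : BddAbove ((fun y => ⟪v, y⟫) '' {y | p y ≤ 1}) := by
  obtain ⟨c, hc, hcp⟩ := p.exists_pos_mul_norm_le hp
  refine ⟨‖v‖ * c⁻¹, ?_⟩
  rintro _ ⟨y, hy, rfl⟩
  have hy' : ‖y‖ ≤ c⁻¹ := by
    rw [← mul_one c⁻¹, le_inv_mul_iff₀ hc]
    exact (hcp y).trans hy
  exact (real_inner_le_norm v y).trans (mul_le_mul_of_nonneg_left hy' (norm_nonneg v))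

theorem inner_le_dualNorm_mul (hp : ∀ x, p x = 0 → x = 0) (v z : EuclideanSpace ℝ (Fin d)) :
    ⟪v, z⟫ ≤ dualNorm p v * p z := by
  rcases (apply_nonneg p z).eq_or_lt with hz | hz
  · simp [hp z hz.symm]
  have hmem : (p z)⁻¹ • z ∈ {y | p y ≤ 1} := by
    simp [map_smul_eq_mul, abs_of_pos hz, hz.ne']
  have hle : ⟪v, (p z)⁻¹ • z⟫ ≤ dualNorm p v :=
    le_csSup (bddAbove_inner_image_seminorm_le_one p hp v) ⟨_, hmem, rfl⟩
  rwa [real_inner_smul_right, inv_mul_le_iff₀ hz, mul_comm] at hle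

theorem inner_sq_le_dualNorm_sq_mul (hp : ∀ x, p x = 0 → x = 0)
    (v z : EuclideanSpace ℝ (Fin d)) : ⟪v, z⟫ ^ 2 ≤ dualNorm p v ^ 2 * p z ^ 2 := by
  have hneg := inner_le_dualNorm_mul p hp v (-z)
  rw [inner_neg_right, map_neg_eq_map] at hneg
  rw [← mul_pow]
  exact sq_le_sq' (by linarith) (inner_le_dualNorm_mul p hp v z)

theorem sum_inner_sq_le_sum_dualNorm_sq_mul (hp : ∀ x, p x = 0 → x = 0) {ι : Type*}
    [Fintype ι] (v : ι → EuclideanSpace ℝ (Fin d)) (z : EuclideanSpace ℝ (Fin d)) :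
    ∑ i, ⟪v i, z⟫ ^ 2 ≤ (∑ i, dualNorm p (v i) ^ 2) * p z ^ 2 := by
  rw [Finset.sum_mul]
  exact Finset.sum_le_sum fun i _ => inner_sq_le_dualNorm_sq_mul p hp (v i) z

end DualNorm

theorem IsMinOn.inner_gradient_sub_nonneg {F : Type*} [NormedAddCommGroup F]
    [InnerProductSpace ℝ F] [CompleteSpace F] {f : F → ℝ} {s : Set F} {x y g : F}
    (hmin : IsMinOn f s x) (hs : Convex ℝ s) (hf : HasGradientAt f g x) (hx : x ∈ s)
    (hy : y ∈ s) : 0 ≤ ⟪g, y - x⟫ := by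
  simpa using hmin.localize.hasFDerivWithinAt_nonneg hf.hasFDerivAt.hasFDerivWithinAt
    (sub_mem_posTangentConeAt_of_segment_subset (hs.segment_subset hx hy))

section Bregman

variable {d : ℕ} {φ : EuclideanSpace ℝ (Fin d) → ℝ}
  {gφ : EuclideanSpace ℝ (Fin d) → EuclideanSpace ℝ (Fin d)}

theorem breg_sub_breg_sub_breg (x y z : EuclideanSpace ℝ (Fin d)) :
    breg φ gφ z x - breg φ gφ z y - breg φ gφ y x = ⟪gφ y - gφ x, z - y⟫ := by
  simp only [breg, inner_sub_left, inner_sub_right]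
  ring

theorem hasGradientAt_inner_add_mul_breg {s y z : EuclideanSpace ℝ (Fin d)} (α : ℝ)
    (hφ : HasGradientAt φ (gφ z) z) :
    HasGradientAt (fun μ => ⟪s, μ⟫ + α * breg φ gφ μ y) (s + α • (gφ z - gφ y)) z := by
  rw [hasGradientAt_iff_hasFDerivAt]
  have h := (innerSL ℝ s).hasFDerivAt.add
    ((((hφ.hasFDerivAt.sub_const (φ y)).sub (innerSL ℝ (gφ y)).hasFDerivAt).add_const
      ⟪gφ y, y⟫).const_mul α)
  refine (h.congr_fderiv ?_).congr_of_eventuallyEq (.of_forall fun μ => ?_)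
  · ext v
    simp
  · simp only [breg, inner_sub_right, Pi.add_apply, Pi.sub_apply, innerSL_apply_apply]
    ring

theorem mirror_step_le {Δ : Set (EuclideanSpace ℝ (Fin d))} (hΔ : Convex ℝ Δ)
    {s x xp μ : EuclideanSpace ℝ (Fin d)} {α : ℝ} (hxp : xp ∈ Δ) (hμ : μ ∈ Δ)
    (hφ : HasGradientAt φ (gφ xp) xp)
    (hmin : IsMinOn (fun μ => ⟪s, μ⟫ + α * breg φ gφ μ x) Δ xp) :
    ⟪s, xp - x⟫ + α * breg φ gφ xp x
      ≤ ⟪s, μ - x⟫ + α * breg φ gφ μ x - α * breg φ gφ μ xp := by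
  have hvi := hmin.inner_gradient_sub_nonneg hΔ (hasGradientAt_inner_add_mul_breg α hφ) hxp hμ
  have hsplit : ⟪s, μ - x⟫ = ⟪s, μ - xp⟫ + ⟪s, xp - x⟫ := by
    rw [← inner_add_right, sub_add_sub_cancel]
  have hthree := breg_sub_breg_sub_breg (φ := φ) (gφ := gφ) x xp μ
  rw [inner_add_left, real_inner_smul_left] at hvi
  linear_combination hvi - α * hthree - hsplit

end Bregman

theorem sum_sq_sub_sum_sq_le {ι : Type*} [Fintype ι] (u c e v : ι → ℝ)
    (hv : ∀ i, v i ^ 2 ≤ (u i + (c i + e i)) ^ 2) :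
    (∑ i, v i ^ 2 - ∑ i, u i ^ 2) / 2
      ≤ ∑ i, u i * (c i + e i) + (∑ i, c i ^ 2 + ∑ i, e i ^ 2) := by
  have hterm : ∀ i, v i ^ 2 ≤ u i ^ 2 + 2 * (u i * (c i + e i)) + 2 * (c i ^ 2 + e i ^ 2) :=
    fun i => (hv i).trans (by nlinarith [add_sq_le (a := c i) (b := e i)])
  have hsum := Finset.sum_le_sum fun i (_ : i ∈ Finset.univ) => hterm i
  simp only [Finset.sum_add_distrib, ← Finset.mul_sum] at hsum
  linarith

theorem max_zero_sq_le (t : ℝ) : max t 0 ^ 2 ≤ t ^ 2 :=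
  sq_le_sq.2 (by rw [abs_of_nonneg (le_max_right t 0)]; exact max_le (le_abs_self t) (abs_nonneg t))

theorem dpp_key_bound_general {d L M : ℕ}
    (nrm : EuclideanSpace ℝ (Fin d) → ℝ)
    (hnrm_add : ∀ x y, nrm (x + y) ≤ nrm x + nrm y)
    (hnrm_smul : ∀ (a : ℝ) x, nrm (a • x) = |a| * nrm x)
    (hnrm_def : ∀ x, nrm x = 0 → x = 0)
    (C : Set (EuclideanSpace ℝ (Fin d)))
    (φ : EuclideanSpace ℝ (Fin d) → ℝ)
    (gφ : EuclideanSpace ℝ (Fin d) → EuclideanSpace ℝ (Fin d))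
    (hgrad : ∀ y ∈ interior C, HasGradientAt φ (gφ y) y)
    (Δ : Set (EuclideanSpace ℝ (Fin d))) (hΔC : Δ ⊆ C)
    (hΔconv : Convex ℝ Δ)
    (β R : ℝ)
    (hdiam : ∀ x ∈ Δ, ∀ y ∈ Δ, (nrm (x - y)) ^ 2 ≤ 2 * R / β)
    (hpt : ∀ μ ∈ Δ, (nrm μ) ^ 2 ≤ 2 * R / β)
    (V α : ℝ) (hV : 0 < V)
    (x : EuclideanSpace ℝ (Fin d)) (hx : x ∈ Δ ∩ interior C)
    (Q : Fin L → ℝ) (hQ : ∀ i, 0 ≤ Q i) (Hm : Fin M → ℝ)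
    (f : EuclideanSpace ℝ (Fin d) → ℝ)
    (g : Fin L → EuclideanSpace ℝ (Fin d) → ℝ)
    (pf : EuclideanSpace ℝ (Fin d))
    (hpf : ∀ u ∈ C, f x + ⟪pf, u - x⟫ ≤ f u)
    (p : Fin L → EuclideanSpace ℝ (Fin d))
    (hp : ∀ i, ∀ u ∈ C, g i x + ⟪p i, u - x⟫ ≤ g i u)
    (D₂ G H : ℝ)
    (hD₂ : ∑ i, (dualNorm nrm (p i)) ^ 2 ≤ D₂ ^ 2)
    (hG : ∀ μ ∈ Δ, ∑ i, (g i μ) ^ 2 ≤ G ^ 2)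
    (h : Fin M → EuclideanSpace ℝ (Fin d))
    (hH : ∑ j, (dualNorm nrm (h j)) ^ 2 ≤ H ^ 2)
    (b : Fin M → ℝ) (hb : ∑ j, (b j) ^ 2 ≤ 2 * R * H ^ 2 / β)
    (xp : EuclideanSpace ℝ (Fin d)) (hxp : xp ∈ Δ ∩ interior C)
    (hmin : IsMinOn (fun μ =>
        ⟪V • pf + ∑ i, Q i • p i + ∑ j, Hm j • h j, μ⟫ + α * breg φ gφ μ x) Δ xp)
    (Qp : Fin L → ℝ)
    (hQp : ∀ i, Qp i = max (Q i + g i x + ⟪p i, xp - x⟫) 0)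
    (Hp : Fin M → ℝ)
    (hHp : ∀ j, Hp j = Hm j + ⟪h j, xp⟫ - b j) :
    ∀ μ ∈ Δ,
      V * ⟪pf, xp - x⟫
        + ((∑ i, (Qp i) ^ 2 - ∑ i, (Q i) ^ 2) / 2 + (∑ j, (Hp j) ^ 2 - ∑ j, (Hm j) ^ 2) / 2)
        + α * breg φ gφ xp x
      ≤ V * (f μ - f x) + ∑ i, Q i * g i μ + ∑ j, Hm j * (⟪h j, μ⟫ - b j)
        + α * breg φ gφ μ x - α * breg φ gφ μ xp
        + (4 * R * H ^ 2 / β + G ^ 2 + 2 * R * D₂ ^ 2 / β) := by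
  intro μ hμ
  let N : Seminorm ℝ (EuclideanSpace ℝ (Fin d)) :=
    Seminorm.of nrm hnrm_add fun a y => by rw [hnrm_smul, Real.norm_eq_abs]
  have hpx : ∑ i, ⟪p i, xp - x⟫ ^ 2 ≤ D₂ ^ 2 * (2 * R / β) :=
    (sum_inner_sq_le_sum_dualNorm_sq_mul N hnrm_def p (xp - x)).trans
      (mul_le_mul hD₂ (hdiam xp hxp.1 x hx.1) (sq_nonneg _) (sq_nonneg _))
  have hhx : ∑ j, ⟪h j, xp⟫ ^ 2 ≤ H ^ 2 * (2 * R / β) :=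
    (sum_inner_sq_le_sum_dualNorm_sq_mul N hnrm_def h xp).trans
      (mul_le_mul hH (hpt xp hxp.1) (sq_nonneg _) (sq_nonneg _))
  have hQdrift := sum_sq_sub_sum_sq_le Q (fun i => g i x) (fun i => ⟪p i, xp - x⟫) Qp
    fun i => by rw [hQp, ← add_assoc]; exact max_zero_sq_le _
  have hHdrift := sum_sq_sub_sum_sq_le Hm (fun j => ⟪h j, xp⟫) (fun j => -b j) Hp
    fun j => by rw [hHp, ← sub_eq_add_neg, add_sub_assoc]
  have hstep := mirror_step_le hΔconv hxp.1 hμ (hgrad xp hxp.2) hmin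
  have hf : V * ⟪pf, μ - x⟫ ≤ V * (f μ - f x) :=
    mul_le_mul_of_nonneg_left (by linarith [hpf μ (hΔC hμ)]) hV.le
  have hg : ∑ i, Q i * (g i x + ⟪p i, μ - x⟫) ≤ ∑ i, Q i * g i μ :=
    Finset.sum_le_sum fun i _ => mul_le_mul_of_nonneg_left (hp i μ (hΔC hμ)) (hQ i)
  simp only [inner_add_left, sum_inner, real_inner_smul_left, inner_sub_right, mul_add, mul_sub,
    mul_neg, Finset.sum_add_distrib, Finset.sum_sub_distrib, Finset.sum_neg_distrib, neg_sq]
    at hpx hQdrift hHdrift hstep hf hg ⊢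
  linear_combination hstep + hQdrift + hHdrift + hf + hg + hG x hx.1 + hpx + hhx + hb

/-- **Key drift-plus-penalty bound (one step of the primal-dual mirror descent).**
With `M₀ = 4RH²/β + G² + 2RD₂²/β`, for every `μ ∈ Δ`,
`V⟪p_f, x⁺−x⟫ + Δdrift + αD(x⁺,x) ≤ V(f(μ)−f(x)) + Σᵢ Qᵢ gᵢ(μ) + Σⱼ Hⱼ(⟪hⱼ,μ⟫−bⱼ)
 + αD(μ,x) − αD(μ,x⁺) + M₀`. -/
theorem dpp_key_bound {d L M : ℕ}
    (nrm : EuclideanSpace ℝ (Fin d) → ℝ)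
    (hnrm_add : ∀ x y, nrm (x + y) ≤ nrm x + nrm y)
    (hnrm_smul : ∀ (a : ℝ) x, nrm (a • x) = |a| * nrm x)
    (hnrm_def : ∀ x, nrm x = 0 → x = 0)
    (C : Set (EuclideanSpace ℝ (Fin d))) (hCconv : Convex ℝ C)
    (hCint : (interior C).Nonempty)
    (φ : EuclideanSpace ℝ (Fin d) → ℝ)
    (gφ : EuclideanSpace ℝ (Fin d) → EuclideanSpace ℝ (Fin d))
    (hgrad : ∀ y ∈ interior C, HasGradientAt φ (gφ y) y)
    (hgcont : ContinuousOn gφ (interior C))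
    (Δ : Set (EuclideanSpace ℝ (Fin d))) (hΔC : Δ ⊆ C)
    (hΔcomp : IsCompact Δ) (hΔconv : Convex ℝ Δ) (hΔ0 : (0 : EuclideanSpace ℝ (Fin d)) ∈ Δ)
    (hΔo : (Δ ∩ interior C).Nonempty)
    (β R : ℝ) (hβ : 0 < β) (hR : 0 < R)
    (hstrong : ∀ x ∈ interior C, ∀ y ∈ interior C,
      β / 2 * (nrm (x - y)) ^ 2 ≤ breg φ gφ x y)
    (hDbound : ∀ x ∈ Δ, ∀ y ∈ Δ ∩ interior C, breg φ gφ x y ≤ R)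
    (hdiam : ∀ x ∈ Δ, ∀ y ∈ Δ, (nrm (x - y)) ^ 2 ≤ 2 * R / β)
    (hpt : ∀ μ ∈ Δ, (nrm μ) ^ 2 ≤ 2 * R / β)
    (V α : ℝ) (hV : 0 < V) (hα : 0 < α)
    (x : EuclideanSpace ℝ (Fin d)) (hx : x ∈ Δ ∩ interior C)
    (Q : Fin L → ℝ) (hQ : ∀ i, 0 ≤ Q i) (Hm : Fin M → ℝ)
    (f : EuclideanSpace ℝ (Fin d) → ℝ) (hfconv : ConvexOn ℝ C f)
    (g : Fin L → EuclideanSpace ℝ (Fin d) → ℝ) (hgconv : ∀ i, ConvexOn ℝ C (g i))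
    (pf : EuclideanSpace ℝ (Fin d))
    (hpf : ∀ u ∈ C, f x + ⟪pf, u - x⟫ ≤ f u)
    (p : Fin L → EuclideanSpace ℝ (Fin d))
    (hp : ∀ i, ∀ u ∈ C, g i x + ⟪p i, u - x⟫ ≤ g i u)
    (D₂ G H : ℝ)
    (hD₂ : ∑ i, (dualNorm nrm (p i)) ^ 2 ≤ D₂ ^ 2)
    (hG : ∀ μ ∈ Δ, ∑ i, (g i μ) ^ 2 ≤ G ^ 2)
    (h : Fin M → EuclideanSpace ℝ (Fin d))
    (hH : ∑ j, (dualNorm nrm (h j)) ^ 2 ≤ H ^ 2)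
    (b : Fin M → ℝ) (hb : ∑ j, (b j) ^ 2 ≤ 2 * R * H ^ 2 / β)
    (xp : EuclideanSpace ℝ (Fin d)) (hxp : xp ∈ Δ ∩ interior C)
    (hmin : IsMinOn (fun μ =>
        ⟪V • pf + ∑ i, Q i • p i + ∑ j, Hm j • h j, μ⟫ + α * breg φ gφ μ x) Δ xp)
    (Qp : Fin L → ℝ)
    (hQp : ∀ i, Qp i = max (Q i + g i x + ⟪p i, xp - x⟫) 0)
    (Hp : Fin M → ℝ)
    (hHp : ∀ j, Hp j = Hm j + ⟪h j, xp⟫ - b j) :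
    ∀ μ ∈ Δ,
      V * ⟪pf, xp - x⟫
        + ((∑ i, (Qp i) ^ 2 - ∑ i, (Q i) ^ 2) / 2 + (∑ j, (Hp j) ^ 2 - ∑ j, (Hm j) ^ 2) / 2)
        + α * breg φ gφ xp x
      ≤ V * (f μ - f x) + ∑ i, Q i * g i μ + ∑ j, Hm j * (⟪h j, μ⟫ - b j)
        + α * breg φ gφ μ x - α * breg φ gφ μ xp
        + (4 * R * H ^ 2 / β + G ^ 2 + 2 * R * D₂ ^ 2 / β) :=
  dpp_key_bound_general nrm hnrm_add hnrm_smul hnrm_def C φ gφ hgrad Δ hΔC hΔconv β R hdiam hpt V α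
    hV x hx Q hQ Hm f g pf hpf p hp D₂ G H hD₂ hG h hH b hb xp hxp hmin Qp hQp Hp hHp
end
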